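/- For any strong composition α, both 𝔉_α and 𝔉_{sort(α)} occur as terms in the fundamental slide expansion of κ_α; equivalently, there exist quasi-Yamanouchi Kohnert tableaux of content α with weights α and sort(α) respectively. Specifically, bottom-justifying each column of the basic tableau with entries increasing bottom to top gives a quasi-Yamanouchi Kohnert tableau of weight sort(α). -/

import Mathlib

/-- `b` dominates `a`: every partial sum of `b` is at least that of `a`. -/
def Dominates (b a : List ℕ) : Prop :=
  ∀ i : ℕ, (a.take i).sum ≤ (b.take i).sum

/-- `flatten a` removes the zero parts of a weak composition. -/
def Flatten (a : List ℕ) : List ℕ := a.filter (· != 0)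

/-- `β` refines `α`: `β` decomposes into consecutive nonempty blocks whose sums give `α`. -/
def Refines (β α : List ℕ) : Prop :=
  ∃ L : List (List ℕ), (∀ l ∈ L, l ≠ []) ∧ L.flatten = β ∧ L.map List.sum = α

/-- The set of inversions of a composition: pairs `i < j` with `α i < α j`. -/
def invSet (α : List ℕ) : Finset (Fin α.length × Fin α.length) :=
  Finset.univ.filter fun p => p.1 < p.2 ∧ α.get p.1 < α.get p.2

/-- Kohnert tableau of content `a`, encoded as a filling `T : (row, col) → entry`,
with `0` meaning an empty position, rows and columns indexed from `1`. -/
def IsKohnert (a : List ℕ) (T : ℕ × ℕ → ℕ) : Prop :=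
  -- cells live at positive coordinates
  (∀ r c, T (r, c) ≠ 0 → 1 ≤ r ∧ 1 ≤ c) ∧
  -- entries are among 1,…,ℓ
  (∀ r c, T (r, c) ≠ 0 → 1 ≤ T (r, c) ∧ T (r, c) ≤ a.length) ∧
  -- (i) for each i there is exactly one i in each column 1,…,aᵢ and none beyond
  (∀ i, 1 ≤ i → i ≤ a.length → ∀ c, 1 ≤ c →
    (c ≤ a.getD (i - 1) 0 → ∃! r, T (r, c) = i) ∧
    (a.getD (i - 1) 0 < c → ∀ r, T (r, c) ≠ i)) ∧
  -- (ii) each entry in row r is at least r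
  (∀ r c, T (r, c) ≠ 0 → r ≤ T (r, c)) ∧
  -- (iii) the cells filled with a given entry weakly descend from left to right
  (∀ r c r' c', T (r, c) ≠ 0 → T (r, c) = T (r', c') → c < c' → r' ≤ r) ∧
  -- (iv) if i < j share a column with i above j, there is an i in the next column,
  -- strictly above the cell containing j
  (∀ r r' c, T (r, c) ≠ 0 → T (r', c) ≠ 0 → T (r, c) < T (r', c) → r' < r →
    ∃ r'', r' < r'' ∧ T (r'', c + 1) = T (r, c))

/-- Quasi-Yamanouchi Kohnert tableau: additionally (v) every nonempty row `r` contains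
the entry `r`, or has a cell in row `r+1` weakly right of one of its cells. -/
def IsQYKohnert (a : List ℕ) (T : ℕ × ℕ → ℕ) : Prop :=
  IsKohnert a T ∧
  ∀ r, 1 ≤ r → (∃ c, T (r, c) ≠ 0) →
    ((∃ c, T (r, c) = r) ∨ ∃ c c', T (r, c) ≠ 0 ∧ T (r + 1, c') ≠ 0 ∧ c ≤ c')

/-- The weight of a filling: the list recording the number of cells in each row `1,…,ℓ`. -/
def wtList (a : List ℕ) (T : ℕ × ℕ → ℕ) : List ℕ :=
  (List.range a.length).map fun r =>
    ((Finset.Icc 1 a.sum).filter fun c => T (r + 1, c) ≠ 0).card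

open Classical in
/-- Coefficient of the monomial `x^b` in the fundamental slide polynomial `𝔉_a`. -/
noncomputable def fundCoeff (a b : List ℕ) : ℕ :=
  if b.length = a.length ∧ Dominates b a ∧ Refines (Flatten b) (Flatten a) then 1 else 0

/-- Coefficient of the monomial `x^b` in the key polynomial `κ_a`:
the number of Kohnert tableaux of content `a` and weight `b`. -/
noncomputable def keyCoeff (a b : List ℕ) : ℕ :=
  Set.ncard {T : ℕ × ℕ → ℕ | IsKohnert a T ∧ wtList a T = b}

/-- The basic filling of content `a`: `aᵢ` cells filled with `i` in row `i`, columns `1,…,aᵢ`. -/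
def basicFilling (a : List ℕ) : ℕ × ℕ → ℕ := fun p =>
  if 1 ≤ p.1 ∧ p.1 ≤ a.length ∧ 1 ≤ p.2 ∧ p.2 ≤ a.getD (p.1 - 1) 0 then p.1 else 0

/-- `κ_α` is multiplicity free in the fundamental slide basis: quasi-Yamanouchi
Kohnert tableaux of content `α` have pairwise distinct weights. -/
def MultFree (α : List ℕ) : Prop :=
  ∀ T₁ T₂ : ℕ × ℕ → ℕ, IsQYKohnert α T₁ → IsQYKohnert α T₂ →
    wtList α T₁ = wtList α T₂ → T₁ = T₂

/-!
The basic filling, with `αᵢ` copies of `i` in row `i`, is a Kohnert tableau of weight `α` in which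
every nonempty row `i` contains its own label, so it is quasi-Yamanouchi. For `sort(α)`, slide the
cells of each column `c` down so that its entries `i` with `c ≤ αᵢ`, increasing upwards, fill rows
`1, 2, …`. Entry `i` then sits in row `1 + #{j < i : c ≤ αⱼ}`, which decreases weakly as `c` grows
and increases with `i` inside a column, giving conditions (ii)–(iv); row `r` has a cell in column `c`
iff at least `r` parts are `≥ c`, so its length is the `r`-th largest part. When all parts are
positive, column `1` holds every entry `i` in row `i`, which gives the quasi-Yamanouchi condition.
-/

theorem List.lt_countP_le_iff_le_getElem {s : List ℕ} (hs : s.Pairwise (· ≥ ·)) {r : ℕ}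
    (hr : r < s.length) (c : ℕ) : r < s.countP (c ≤ ·) ↔ c ≤ s[r] := by
  induction s generalizing r with
  | nil => simp at hr
  | cons a t ih =>
    rw [List.pairwise_cons] at hs
    rw [List.countP_cons]
    by_cases hca : c ≤ a
    · cases r with
      | zero => simp [hca]
      | succ r => simpa [hca] using ih hs.2 (by simpa using hr)
    · have hfalse : ∀ x ∈ t, ¬c ≤ x := fun x hx hcx => hca (hcx.trans (hs.1 x hx))
      rw [List.countP_eq_zero.2 (by simpa using hfalse)]
      cases r with
      | zero => simp [hca]
      | succ r => simpa [hca] using hfalse _ (List.getElem_mem (by simpa using hr))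

theorem List.map_getD_range (l : List ℕ) : (List.range l.length).map (l.getD · 0) = l :=
  List.ext_getElem (by simp) fun i _ h => by simp [h]

theorem Nat.exists_count_eq_of_lt_count {p : ℕ → Prop} [DecidablePred p] {k n : ℕ}
    (h : k < Nat.count p n) : ∃ m < n, p m ∧ Nat.count p m = k := by
  induction n with
  | zero => simp at h
  | succ n ih =>
    rw [Nat.count_succ] at h
    by_cases hk : k < Nat.count p n
    · obtain ⟨m, hm, hpm, hcount⟩ := ih hk
      exact ⟨m, by omega, hpm, hcount⟩
    · by_cases hpn : p n
      · rw [if_pos hpn] at h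
        exact ⟨n, n.lt_succ_self, hpn, by omega⟩
      · rw [if_neg hpn] at h
        omega

theorem List.lt_length_of_le_getD {l : List ℕ} {c i : ℕ} (hc : 1 ≤ c) (hci : c ≤ l.getD i 0) :
    i < l.length := by
  by_contra h
  rw [List.getD_eq_default _ _ (by omega)] at hci
  omega

theorem List.one_le_getD_of_pos {l : List ℕ} (hpos : ∀ x ∈ l, 0 < x) {i : ℕ} (hi : i < l.length) :
    1 ≤ l.getD i 0 := by
  rw [List.getD_eq_getElem _ _ hi]
  exact hpos _ (List.getElem_mem hi)

theorem wtList_eq_of_row_eq_Icc {α w : List ℕ} {T : ℕ × ℕ → ℕ} (hlen : w.length = α.length)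
    (hle : ∀ x ∈ w, x ≤ α.sum)
    (hrow : ∀ r (hr : r < w.length) c, T (r + 1, c) ≠ 0 ↔ 1 ≤ c ∧ c ≤ w[r]) :
    wtList α T = w := by
  refine List.ext_getElem (by simp [wtList, hlen]) fun r _ hr => ?_
  have hwr := hle _ (List.getElem_mem hr)
  have hcells : (Finset.Icc 1 α.sum).filter (fun c => T (r + 1, c) ≠ 0) = Finset.Icc 1 w[r] := by
    ext c
    simp only [Finset.mem_filter, Finset.mem_Icc, hrow r hr c]
    omega
  simp [wtList, hcells]

section BasicFilling

variable {a : List ℕ} {r c : ℕ}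

theorem basicFilling_ne_zero_iff :
    basicFilling a (r, c) ≠ 0 ↔ 1 ≤ r ∧ r ≤ a.length ∧ 1 ≤ c ∧ c ≤ a.getD (r - 1) 0 := by
  unfold basicFilling
  dsimp only
  split_ifs with h
  · simp only [h, and_self, iff_true]
    omega
  · simpa using h

theorem basicFilling_eq_of_ne_zero (h : basicFilling a (r, c) ≠ 0) : basicFilling a (r, c) = r := by
  unfold basicFilling at h ⊢
  split_ifs at h ⊢ <;> simp_all

theorem isQYKohnert_basicFilling (a : List ℕ) : IsQYKohnert a (basicFilling a) := by
  refine ⟨⟨?_, ?_, ?_, ?_, ?_, ?_⟩, ?_⟩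
  · intro r c h
    have := basicFilling_ne_zero_iff.1 h
    omega
  · intro r c h
    have := basicFilling_ne_zero_iff.1 h
    rw [basicFilling_eq_of_ne_zero h]
    omega
  · intro i hi1 hi2 c hc
    constructor
    · intro hci
      have hcell : basicFilling a (i, c) ≠ 0 := basicFilling_ne_zero_iff.2 ⟨hi1, hi2, hc, hci⟩
      refine ⟨i, basicFilling_eq_of_ne_zero hcell, fun r hr => ?_⟩
      rw [← hr, basicFilling_eq_of_ne_zero (by rw [hr]; omega)]
    · intro hlt r hr
      have hcell : basicFilling a (r, c) ≠ 0 := by omega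
      have := basicFilling_ne_zero_iff.1 hcell
      rw [basicFilling_eq_of_ne_zero hcell] at hr
      subst hr
      omega
  · intro r c h
    rw [basicFilling_eq_of_ne_zero h]
  · intro r c r' c' h heq _
    have h' : basicFilling a (r', c') ≠ 0 := by rwa [← heq]
    rw [basicFilling_eq_of_ne_zero h, basicFilling_eq_of_ne_zero h'] at heq
    omega
  · intro r r' c h h' hlt _
    rw [basicFilling_eq_of_ne_zero h, basicFilling_eq_of_ne_zero h'] at hlt
    omega
  · intro r _ ⟨c, hc⟩
    have := basicFilling_ne_zero_iff.1 hc
    exact .inl ⟨1, basicFilling_eq_of_ne_zero (basicFilling_ne_zero_iff.2 (by omega))⟩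

theorem wtList_basicFilling (a : List ℕ) : wtList a (basicFilling a) = a := by
  refine wtList_eq_of_row_eq_Icc rfl (fun x hx => List.le_sum_of_mem hx) fun r hr c => ?_
  rw [basicFilling_ne_zero_iff, Nat.add_sub_cancel, List.getD_eq_getElem _ _ hr]
  omega

end BasicFilling

/-- Entries and rows counted from `0`: bottom-justified, entry `i` of column `c` sits in row
`colRank α c i`. -/
def colRank (α : List ℕ) (c i : ℕ) : ℕ := Nat.count (fun j => c ≤ α.getD j 0) i

open Classical in
/-- The basic filling with every column bottom-justified. -/
noncomputable def bottomFilling (α : List ℕ) (p : ℕ × ℕ) : ℕ :=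
  if h : ∃ i, 1 ≤ p.2 ∧ p.2 ≤ α.getD i 0 ∧ colRank α p.2 i + 1 = p.1 then h.choose + 1 else 0

section BottomFilling

variable {α : List ℕ} {r c i : ℕ}

theorem colRank_le (α : List ℕ) (c i : ℕ) : colRank α c i ≤ i := Nat.count_le _

theorem colRank_antitone {c c' : ℕ} (hcc' : c ≤ c') (i : ℕ) : colRank α c' i ≤ colRank α c i :=
  Nat.count_mono_left fun _ _ hk => hcc'.trans hk

theorem colRank_lt_colRank {j : ℕ} (hci : c ≤ α.getD i 0) (hij : i < j) :
    colRank α c i < colRank α c j :=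
  Nat.count_strict_mono hci hij

theorem colRank_injective {j : ℕ} (hci : c ≤ α.getD i 0) (hcj : c ≤ α.getD j 0)
    (h : colRank α c i = colRank α c j) : i = j :=
  Nat.count_injective hci hcj h

theorem colRank_length (α : List ℕ) (c : ℕ) : colRank α c α.length = α.countP (c ≤ ·) := by
  conv_rhs => rw [← List.map_getD_range α]
  rw [List.countP_map]
  rfl

theorem colRank_one_of_pos (hpos : ∀ x ∈ α, 0 < x) (hi : i ≤ α.length) : colRank α 1 i = i :=
  Nat.count_iff_forall.2 fun _ hk => List.one_le_getD_of_pos hpos (by omega)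

theorem bottomFilling_eq_succ_iff :
    bottomFilling α (r, c) = i + 1 ↔ 1 ≤ c ∧ c ≤ α.getD i 0 ∧ colRank α c i + 1 = r := by
  unfold bottomFilling
  dsimp only
  split_ifs with h
  · obtain ⟨-, hci, hr⟩ := h.choose_spec
    refine ⟨fun heq => Nat.succ_inj.1 heq ▸ h.choose_spec, fun ⟨_, hci', hr'⟩ => ?_⟩
    rw [colRank_injective hci hci' (by omega)]
  · exact iff_of_false not_false fun hi => h ⟨i, hi⟩

theorem exists_eq_succ_of_bottomFilling_ne_zero (h : bottomFilling α (r, c) ≠ 0) :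
    ∃ i, 1 ≤ c ∧ c ≤ α.getD i 0 ∧ colRank α c i + 1 = r ∧ bottomFilling α (r, c) = i + 1 := by
  obtain ⟨i, hi⟩ := Nat.exists_eq_succ_of_ne_zero h
  obtain ⟨hc, hci, hr⟩ := bottomFilling_eq_succ_iff.1 hi
  exact ⟨i, hc, hci, hr, hi⟩

theorem bottomFilling_succ_ne_zero_iff :
    bottomFilling α (r + 1, c) ≠ 0 ↔ 1 ≤ c ∧ r < α.countP (c ≤ ·) := by
  rw [← colRank_length]
  constructor
  · intro h
    obtain ⟨i, hc, hci, hr, -⟩ := exists_eq_succ_of_bottomFilling_ne_zero h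
    have := colRank_lt_colRank hci (List.lt_length_of_le_getD hc hci)
    exact ⟨hc, by omega⟩
  · rintro ⟨hc, hr⟩
    obtain ⟨i, -, hci, hi⟩ := Nat.exists_count_eq_of_lt_count hr
    rw [bottomFilling_eq_succ_iff.2 ⟨hc, hci, congrArg (· + 1) hi⟩]
    exact Nat.succ_ne_zero i

theorem isKohnert_bottomFilling (α : List ℕ) : IsKohnert α (bottomFilling α) := by
  refine ⟨?_, ?_, ?_, ?_, ?_, ?_⟩
  · intro r c h
    obtain ⟨i, hc, -, hr, -⟩ := exists_eq_succ_of_bottomFilling_ne_zero h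
    omega
  · intro r c h
    obtain ⟨i, hc, hci, -, hi⟩ := exists_eq_succ_of_bottomFilling_ne_zero h
    have := List.lt_length_of_le_getD hc hci
    omega
  · intro i hi1 _ c hc
    obtain ⟨i, rfl⟩ := Nat.exists_eq_add_one.2 hi1
    rw [Nat.add_sub_cancel]
    constructor
    · intro hci
      exact ⟨colRank α c i + 1, bottomFilling_eq_succ_iff.2 ⟨hc, hci, rfl⟩,
        fun r hr => (bottomFilling_eq_succ_iff.1 hr).2.2.symm⟩
    · intro hlt r hr
      have := (bottomFilling_eq_succ_iff.1 hr).2.1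
      omega
  · intro r c h
    obtain ⟨i, -, -, hr, hi⟩ := exists_eq_succ_of_bottomFilling_ne_zero h
    have := colRank_le α c i
    omega
  · intro r c r' c' h heq hcc'
    obtain ⟨i, -, -, hr, hi⟩ := exists_eq_succ_of_bottomFilling_ne_zero h
    obtain ⟨-, -, hr'⟩ := bottomFilling_eq_succ_iff.1 (heq.symm.trans hi)
    have := colRank_antitone (α := α) hcc'.le i
    omega
  · intro r r' c h h' hlt hr'r
    obtain ⟨i, -, hci, hr, hi⟩ := exists_eq_succ_of_bottomFilling_ne_zero h
    obtain ⟨j, -, -, hr', hj⟩ := exists_eq_succ_of_bottomFilling_ne_zero h'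
    have := colRank_lt_colRank hci (show i < j by omega)
    omega

theorem isQYKohnert_bottomFilling (hpos : ∀ x ∈ α, 0 < x) : IsQYKohnert α (bottomFilling α) := by
  refine ⟨isKohnert_bottomFilling α, fun r hr ⟨c, hc⟩ => .inl ⟨1, ?_⟩⟩
  obtain ⟨i, hc, hci, hri, -⟩ := exists_eq_succ_of_bottomFilling_ne_zero hc
  have hi := List.lt_length_of_le_getD hc hci
  have := colRank_le α c i
  obtain ⟨r, rfl⟩ := Nat.exists_eq_add_one.2 hr
  exact bottomFilling_eq_succ_iff.2
    ⟨le_rfl, List.one_le_getD_of_pos hpos (by omega), by rw [colRank_one_of_pos hpos (by omega)]⟩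

theorem wtList_bottomFilling {s : List ℕ} (hperm : s.Perm α) (hsort : s.Pairwise (· ≥ ·)) :
    wtList α (bottomFilling α) = s :=
  wtList_eq_of_row_eq_Icc hperm.length_eq (fun _ hx => List.le_sum_of_mem (hperm.subset hx))
    fun r hr c => by
      rw [bottomFilling_succ_ne_zero_iff, ← hperm.countP_eq,
        List.lt_countP_le_iff_le_getElem hsort hr]

end BottomFilling

/-- for any strong composition `α` there are quasi-Yamanouchi Kohnert
tableaux of content `α` of weight `α` and of weight `sort(α)`, so both `𝔉_α` and
`𝔉_{sort(α)}` occur in the fundamental slide expansion of `κ_α`. -/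
theorem stmt15 (α : List ℕ) (hpos : ∀ x ∈ α, 0 < x) :
    (∃ T : ℕ × ℕ → ℕ, IsQYKohnert α T ∧ wtList α T = α) ∧
    (∀ s : List ℕ, s.Perm α → List.Pairwise (· ≥ ·) s →
      ∃ T : ℕ × ℕ → ℕ, IsQYKohnert α T ∧ wtList α T = s) :=
  ⟨⟨basicFilling α, isQYKohnert_basicFilling α, wtList_basicFilling α⟩,
    fun _ hperm hsort =>
      ⟨bottomFilling α, isQYKohnert_bottomFilling hpos, wtList_bottomFilling hperm hsort⟩⟩
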